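/- Let s ≥ 1 and 1 ≤ k ≤ n. For every matrix R ∈ F^(s×n), the number of message matrices M ∈ F^(s×k) whose codeword C(M) = M·λ_k(β)_a⃗ satisfies (s+1)·wt_ΣR(R − C(M)) < s·(n − k + 1) is at most q^(m·k·(s−1)). -/

import Mathlib

/-!
Interpolation decoding. Choose a nonzero tuple `(Q₀, Q₁, …, Q_s)` of skew polynomials with
`deg Q₀ < D₀`, `deg Q_t < D₁ = D₀ + 1 - k` and `Q₀(β_p) + ∑_t Q_t(R_{t,p}) = 0` at every position
`p`; this is possible since there are more unknowns than the `n` equations. For a list element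
`M`, the polynomial `P = Q₀ + ∑_t Q_t · M_t` has degree `< D₀`, and on block `i` it vanishes on
the `K`-combinations of `β^{(i)}` whose coefficients kill the columns of the error `R - C(M)`,
a space of dimension `n_i - rk_q((R - C(M))^{(i)})`. These dimensions add up to at least `D₀`
by the weight bound, and since the `a_i` are pairwise non-σ-conjugate, `P = 0`. So every list
element solves `∑_t Q_t · M_t = -Q₀`. Taking `Q_τ ≠ 0`, the absence of zero divisors in
`F[x; σ]` means that a solution is determined by its `s - 1` rows other than `τ`, giving at most
`q^{m k (s - 1)}` solutions.
-/

namespace Stmt14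

/-- `genNorm σ a i = σ^(i-1)(a) ⋯ σ(a) · a`, the generalized power function `N_i(a)`. -/
def genNorm {F : Type} [Field F] (σ : F ≃+* F) (a : F) : ℕ → F
  | 0 => 1
  | i + 1 => (⇑σ)^[i] a * genNorm σ a i

/-- Generalized operator `D_a^i(b) = σ^i(b) · N_i(a)` for `i ∈ ℕ`. -/
def opev {F : Type} [Field F] (σ : F ≃+* F) (a b : F) (i : ℕ) : F :=
  (⇑σ)^[i] b * genNorm σ a i

/-- `b` is σ-conjugate to `a`, i.e. `b = σ(c)·a·c⁻¹` for some nonzero `c`. -/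
def SConj {F : Type} [Field F] (σ : F ≃+* F) (a b : F) : Prop :=
  ∃ c : F, c ≠ 0 ∧ b = σ c * a * c⁻¹

/-- σ-generalized Moore matrix `λ_d(x)_a⃗` w.r.t. the length partition `nn`:
its row `r` applies `D_{a_i}^r` entrywise to the `i`-th block of `x`. -/
def moore {F : Type} [Field F] (σ : F ≃+* F) {ℓ : ℕ} (nn : Fin ℓ → ℕ) (aa : Fin ℓ → F)
    (d : ℕ) (x : (Σ i : Fin ℓ, Fin (nn i)) → F) :
    Matrix (Fin d) (Σ i : Fin ℓ, Fin (nn i)) F :=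
  Matrix.of fun r p => opev σ (aa p.1) (x p) (r : ℕ)

/-- `λ_d(X)_a⃗` for a matrix `X`: the stack of `λ_d(x_j)_a⃗` over the rows of `X`. -/
def mooreMat {F : Type} [Field F] (σ : F ≃+* F) {ℓ : ℕ} (nn : Fin ℓ → ℕ) (aa : Fin ℓ → F)
    {s : ℕ} (d : ℕ) (X : Matrix (Fin s) (Σ i : Fin ℓ, Fin (nn i)) F) :
    Matrix (Fin s × Fin d) (Σ i : Fin ℓ, Fin (nn i)) F :=
  Matrix.of fun r p => opev σ (aa p.1) (X r.1 p) (r.2 : ℕ)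

/-- `rk_q` of a vector: the `K`-dimension of the `K`-span of its entries. -/
noncomputable def rkq (K : Type) [Field K] {F : Type} [Field F] [Algebra K F] {ι : Type}
    (v : ι → F) : ℕ :=
  Module.finrank K (Submodule.span K (Set.range v))

/-- `rk_q` of a matrix: the `K`-dimension of the `K`-span of its columns. -/
noncomputable def rkqMat (K : Type) [Field K] {F : Type} [Field F] [Algebra K F]
    {s : ℕ} {ι : Type} (X : Matrix (Fin s) ι F) : ℕ :=
  Module.finrank K (Submodule.span K (Set.range fun j : ι => fun r : Fin s => X r j))

/-- Sum-rank weight of a blockwise vector. -/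
noncomputable def wtV (K : Type) [Field K] {F : Type} [Field F] [Algebra K F] {ℓ : ℕ}
    (nn : Fin ℓ → ℕ) (x : (Σ i : Fin ℓ, Fin (nn i)) → F) : ℕ :=
  ∑ i, rkq K fun μ : Fin (nn i) => x ⟨i, μ⟩

/-- Sum-rank weight of a blockwise matrix. -/
noncomputable def wtM (K : Type) [Field K] {F : Type} [Field F] [Algebra K F] {s ℓ : ℕ}
    (nn : Fin ℓ → ℕ) (X : Matrix (Fin s) (Σ i : Fin ℓ, Fin (nn i)) F) : ℕ :=
  ∑ i, rkqMat K (Matrix.of fun (r : Fin s) (μ : Fin (nn i)) => X r ⟨i, μ⟩)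

/-- Codeword `C(M) = M · λ_k(β)_a⃗` of the `s`-interleaved linearized Reed–Solomon code. -/
def codeword {F : Type} [Field F] (σ : F ≃+* F) {ℓ : ℕ} (nn : Fin ℓ → ℕ) (aa : Fin ℓ → F)
    (β : (Σ i : Fin ℓ, Fin (nn i)) → F) {s : ℕ} (k : ℕ) (M : Matrix (Fin s) (Fin k) F) :
    Matrix (Fin s) (Σ i : Fin ℓ, Fin (nn i)) F :=
  M * moore σ nn aa k β


open Finset

section Conjugacy

variable {F : Type} [Field F] {σ : F ≃+* F}

lemma SConj.symm {a b : F} (h : SConj σ a b) : SConj σ b a := by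
  obtain ⟨c, hc, rfl⟩ := h
  refine ⟨c⁻¹, inv_ne_zero hc, ?_⟩
  have hσc : σ c ≠ 0 := (map_ne_zero σ).mpr hc
  rw [map_inv₀]
  field_simp

lemma SConj.trans {a b c : F} (hab : SConj σ a b) (hbc : SConj σ b c) : SConj σ a c := by
  obtain ⟨x, hx, rfl⟩ := hab
  obtain ⟨y, hy, rfl⟩ := hbc
  refine ⟨y * x, mul_ne_zero hy hx, ?_⟩
  rw [map_mul, mul_inv]
  ring

end Conjugacy

section OperatorEvaluation

variable {K F : Type} [Field K] [Field F] [Algebra K F] (σ : F ≃+* F)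

lemma opev_eq (a b : F) (j : ℕ) : opev σ a b j = (σ ^ j) b * genNorm σ a j := by
  rw [RingAut.coe_pow]; rfl

lemma opev_zero (a b : F) : opev σ a b 0 = b := by
  simp [opev, genNorm]

lemma genNorm_add (a : F) (u v : ℕ) :
    genNorm σ a (u + v) = (σ ^ u) (genNorm σ a v) * genNorm σ a u := by
  induction v with
  | zero => simp [genNorm]
  | succ v ih =>
    rw [← add_assoc, genNorm, genNorm, ih, map_mul, RingAut.coe_pow, Function.iterate_add_apply]
    ring

lemma opev_opev (a b : F) (u v : ℕ) : opev σ a (opev σ a b v) u = opev σ a b (u + v) := by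
  simp only [opev_eq, map_mul, genNorm_add, pow_add, RingAut.mul_apply]
  ring

lemma opev_succ (a b : F) (j : ℕ) : opev σ a b (j + 1) = opev σ a (σ b * a) j := by
  rw [← opev_opev, opev_eq σ a b 1]
  simp [genNorm]

lemma opev_mul (a c b : F) (j : ℕ) : opev σ a (c * b) j = (σ ^ j) c * opev σ a b j := by
  simp only [opev_eq, map_mul]
  ring

lemma opev_sub (a b c : F) (j : ℕ) : opev σ a (b - c) j = opev σ a b j - opev σ a c j := by
  simp only [opev_eq, map_sub]
  ring

/-- Operator evaluation at `y`, with respect to `a`, of the skew polynomial `∑_{j<d} f_j x^j`. -/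
def opEval (d : ℕ) (f : ℕ → F) (a y : F) : F :=
  ∑ j ∈ range d, f j * opev σ a y j

def DegLT (d : ℕ) (f : ℕ → F) : Prop :=
  ∀ j, d ≤ j → f j = 0

lemma opev_sum {ι : Type} (s : Finset ι) (a : F) (b : ι → F) (j : ℕ) :
    opev σ a (∑ x ∈ s, b x) j = ∑ x ∈ s, opev σ a (b x) j := by
  simp only [opev_eq, map_sum, sum_mul]

lemma opEval_zero_right (d : ℕ) (f : ℕ → F) (a : F) : opEval σ d f a 0 = 0 := by
  simp [opEval, opev_eq]

lemma opEval_add_left (d : ℕ) (f g : ℕ → F) (a y : F) :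
    opEval σ d (f + g) a y = opEval σ d f a y + opEval σ d g a y := by
  simp only [opEval, Pi.add_apply, add_mul, sum_add_distrib]

lemma opEval_sum_left {ι : Type} (s : Finset ι) (d : ℕ) (f : ι → ℕ → F) (a y : F) :
    opEval σ d (∑ t ∈ s, f t) a y = ∑ t ∈ s, opEval σ d (f t) a y := by
  simp only [opEval, Finset.sum_apply, sum_mul]
  exact sum_comm

lemma sum_range_eq_of_eq_zero {M : Type} [AddCommMonoid M] {f : ℕ → M} {m n : ℕ} (hmn : m ≤ n)
    (hf : ∀ k, m ≤ k → f k = 0) : ∑ k ∈ range n, f k = ∑ k ∈ range m, f k :=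
  (sum_subset (range_subset_range.mpr hmn) fun k _ hk => hf k (by simpa using hk)).symm

lemma opEval_eq_of_degLT {d D : ℕ} {f : ℕ → F} (hf : DegLT d f) (hdD : d ≤ D) (a y : F) :
    opEval σ D f a y = opEval σ d f a y :=
  sum_range_eq_of_eq_zero hdD fun j hj => by rw [hf j hj, zero_mul]

variable (hK : ∀ c : K, σ (algebraMap K F c) = algebraMap K F c)
include hK

lemma pow_apply_smul (j : ℕ) (c : K) (y : F) : (σ ^ j) (c • y) = c • (σ ^ j) y := by
  have hfix : (σ ^ j) (algebraMap K F c) = algebraMap K F c := by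
    rw [RingAut.coe_pow]
    exact Function.iterate_fixed (hK c) j
  rw [Algebra.smul_def, Algebra.smul_def, map_mul, hfix]

variable (K) in
def opEvalₗ (d : ℕ) (f : ℕ → F) (a : F) : F →ₗ[K] F where
  toFun := opEval σ d f a
  map_add' y z := by
    simp only [opEval, opev_eq, map_add, ← sum_add_distrib]
    exact sum_congr rfl fun _ _ => by ring
  map_smul' c y := by
    rw [RingHom.id_apply, opEval, opEval, smul_sum]
    refine sum_congr rfl fun j _ => ?_
    rw [opev_eq, opev_eq, pow_apply_smul σ hK]
    simp only [Algebra.smul_def]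
    ring

lemma opEvalₗ_apply (d : ℕ) (f : ℕ → F) (a y : F) :
    opEvalₗ K σ hK d f a y = opEval σ d f a y := rfl

end OperatorEvaluation

section Rank

variable {K V W : Type} [Field K] [AddCommGroup V] [Module K V] [AddCommGroup W] [Module K W]

open Module LinearMap in
lemma finrank_le_finrank_map_add_one (L : V →ₗ[K] W) {b : V} (hL : ker L ≤ K ∙ b)
    (U : Submodule K V) : finrank K U ≤ finrank K (U.map L) + 1 := by
  rcases Nat.eq_zero_or_pos (finrank K U) with hU | hU
  · omega
  have := Module.finite_of_finrank_pos hU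
  have hrk := finrank_range_add_finrank_ker (L.domRestrict U)
  rw [range_domRestrict, ker_domRestrict] at hrk
  have hker : finrank K ((ker L).comap U.subtype) ≤ 1 := by
    rw [← Submodule.finrank_map_subtype_eq]
    calc _ ≤ finrank K (K ∙ b) := Submodule.finrank_mono ((Submodule.map_comap_le _ _).trans hL)
      _ ≤ 1 := (finrank_span_le_card ({b} : Set V)).trans (by simp)
  omega

end Rank

section RightDivision

variable {F : Type} [Field F] (σ : F ≃+* F)

/-- Coefficients of the right quotient of `∑_{t<d} f_t x^t` by `x - c`. -/
def rightQuot (f : ℕ → F) (c : F) (d j : ℕ) : F :=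
  ∑ t ∈ Ico (j + 1) d, f t * ∏ u ∈ Ico (j + 1) t, (σ ^ u) c

lemma degLT_rightQuot (f : ℕ → F) (c : F) (d : ℕ) : DegLT d (rightQuot σ f c (d + 1)) :=
  fun j hj => by rw [rightQuot, Ico_eq_empty (by omega), sum_empty]

lemma rightQuot_eq {f : ℕ → F} {d : ℕ} (hf : DegLT d f) (c : F) (j : ℕ) :
    rightQuot σ f c d j = f (j + 1) + (σ ^ (j + 1)) c * rightQuot σ f c d (j + 1) := by
  by_cases hj : j + 1 < d
  · rw [rightQuot, sum_eq_sum_Ico_succ_bot hj, Ico_self, prod_empty, mul_one, rightQuot,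
      mul_sum]
    congr 1
    refine sum_congr rfl fun t ht => ?_
    rw [prod_eq_prod_Ico_succ_bot (by simp at ht; omega)]
    ring
  · simp only [rightQuot, Ico_eq_empty (by omega : ¬ j + 1 < d),
      Ico_eq_empty (by omega : ¬ j + 1 + 1 < d), sum_empty, hf (j + 1) (by omega)]
    ring

/-- Right division by `x - c`: `f = g · (x - c) + (f_0 + c g_0)`, evaluated at `y`. -/
lemma opEval_succ_eq_rightQuot {d : ℕ} {f : ℕ → F} (hf : DegLT (d + 1) f) (a c y : F) :
    opEval σ (d + 1) f a y =
      opEval σ d (rightQuot σ f c (d + 1)) a (σ y * a - c * y)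
        + (f 0 + c * rightQuot σ f c (d + 1) 0) * y := by
  set g := rightQuot σ f c (d + 1)
  have hrec : ∀ j, g j = f (j + 1) + (σ ^ (j + 1)) c * g (j + 1) := rightQuot_eq σ hf c
  set h : ℕ → F := fun j => (σ ^ j) c * g j * opev σ a y j
  have hshift : ∑ j ∈ range d, h (j + 1) = ∑ j ∈ range d, h j - c * g 0 * y := by
    have hd : h d = 0 := by
      have hgd : g d = 0 := degLT_rightQuot σ f c d d le_rfl
      simp only [h, hgd, mul_zero, zero_mul]
    have h0 : h 0 = c * g 0 * y := by simp [h, opev_zero]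
    have h1 := sum_range_succ' h d
    rw [sum_range_succ, hd, h0] at h1
    linear_combination -h1
  have hsplit : opEval σ d g a (σ y * a - c * y)
      = ∑ j ∈ range d, f (j + 1) * opev σ a y (j + 1) + ∑ j ∈ range d, h (j + 1)
        - ∑ j ∈ range d, h j := by
    rw [opEval, ← sum_add_distrib, ← sum_sub_distrib]
    refine sum_congr rfl fun j _ => ?_
    simp only [h]
    rw [opev_sub, ← opev_succ, opev_mul, hrec j]
    ring
  rw [hsplit, hshift, opEval, sum_range_succ', opev_zero]
  ring

lemma eq_zero_of_rightQuot_eq_zero {d : ℕ} {f : ℕ → F} (hf : DegLT (d + 1) f) {c : F}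
    (h0 : f 0 + c * rightQuot σ f c (d + 1) 0 = 0) (hg : rightQuot σ f c (d + 1) = 0) :
    f = 0 := by
  funext j
  cases j with
  | zero => simpa [hg] using h0
  | succ j => simpa [hg] using (rightQuot_eq σ hf c j).symm

end RightDivision

section Vanishing

variable {K F : Type} [Field K] [Field F] [Algebra K F] (σ : F ≃+* F)
  (hK : ∀ c : K, σ (algebraMap K F c) = algebraMap K F c)

variable (K) in
/-- Operator evaluation of `x - c` with respect to `a`. -/
def evalXSubC (a c : F) : F →ₗ[K] F where
  toFun y := σ y * a - c * y
  map_add' y z := by rw [map_add]; ring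
  map_smul' k y := by
    simp only [Algebra.smul_def, map_mul, hK, RingHom.id_apply]
    ring

lemma sconj_of_mul_sub_mul_eq_zero {a c y : F} (hy : y ≠ 0) (h : σ y * a - c * y = 0) :
    SConj σ a c :=
  ⟨y, hy, by field_simp; linear_combination -h⟩

lemma ker_evalXSubC_eq_bot {a a' b : F} (haa' : ¬ SConj σ a' a) (hb : b ≠ 0) :
    LinearMap.ker (evalXSubC K σ hK a (σ b * a' * b⁻¹)) = ⊥ := by
  refine (Submodule.eq_bot_iff _).mpr fun y hy => by_contra fun hy0 => haa' ?_
  exact SConj.trans ⟨b, hb, rfl⟩ (sconj_of_mul_sub_mul_eq_zero σ hy0 hy).symm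

include hK in
lemma ker_evalXSubC_le_span (hfixK : ∀ x : F, σ x = x → x ∈ Set.range (algebraMap K F))
    {a b : F} (ha : a ≠ 0) (hb : b ≠ 0) :
    LinearMap.ker (evalXSubC K σ hK a (σ b * a * b⁻¹)) ≤ K ∙ b := by
  intro y hy
  replace hy : σ y * a - σ b * a * b⁻¹ * y = 0 := hy
  have hσ : σ y * b = σ b * y := by
    apply mul_left_cancel₀ ha
    field_simp at hy
    linear_combination hy
  obtain ⟨k, hk⟩ := hfixK (y * b⁻¹) (by
    have hσb : σ b ≠ 0 := (map_ne_zero σ).mpr hb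
    rw [map_mul, map_inv₀]
    field_simp
    exact hσ)
  exact Submodule.mem_span_singleton.mpr ⟨k, by rw [Algebra.smul_def, hk]; field_simp⟩

open Module in
include hK in
theorem eq_zero_of_opEval_eq_zero_on
    (hfixK : ∀ x : F, σ x = x → x ∈ Set.range (algebraMap K F))
    {ℓ : ℕ} (aa : Fin ℓ → F) (ha0 : ∀ i, aa i ≠ 0)
    (haconj : ∀ i j : Fin ℓ, i ≠ j → ¬ SConj σ (aa i) (aa j)) (d : ℕ) :
    ∀ (V : Fin ℓ → Submodule K F) (f : ℕ → F), DegLT d f → d ≤ ∑ i, finrank K (V i) →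
      (∀ i, ∀ y ∈ V i, opEval σ d f (aa i) y = 0) → f = 0 := by
  induction d with
  | zero => exact fun _ f hf _ _ => funext fun j => hf j j.zero_le
  | succ d ih =>
    intro V f hf hV hvan
    obtain ⟨i₁, hi₁⟩ : ∃ i, 0 < finrank K (V i) := by
      by_contra! h
      simp only [fun i => Nat.le_zero.mp (h i), sum_const_zero] at hV
      omega
    have := Module.finite_of_finrank_pos hi₁
    obtain ⟨b, hbV, hb⟩ := Submodule.exists_mem_ne_zero_of_ne_bot
      (Submodule.one_le_finrank_iff.mp hi₁)
    -- `b` is a root of `x - c` w.r.t. `a_{i₁}`. Dividing by `x - c` costs one dimension of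
    -- `V_{i₁}` and none of the other `V_i`, as `c` is not σ-conjugate to those `a_i`.
    set c := σ b * aa i₁ * b⁻¹
    set g := rightQuot σ f c (d + 1)
    have hLb : σ b * aa i₁ - c * b = 0 := by simp only [c]; field_simp; ring
    have hr : f 0 + c * g 0 = 0 := by
      have h := hvan i₁ b hbV
      rw [opEval_succ_eq_rightQuot σ hf, hLb, opEval_zero_right, zero_add] at h
      exact (mul_eq_zero.mp h).resolve_right hb
    let L : Fin ℓ → F →ₗ[K] F := fun i => evalXSubC K σ hK (aa i) c
    have hgvan : ∀ i, ∀ y ∈ (V i).map (L i), opEval σ d g (aa i) y = 0 := by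
      rintro i _ ⟨y, hy, rfl⟩
      have h := hvan i y hy
      rwa [opEval_succ_eq_rightQuot σ hf _ c, hr, zero_mul, add_zero] at h
    have hrank : ∀ i,
        finrank K (V i) ≤ finrank K ((V i).map (L i)) + if i = i₁ then 1 else 0 := by
      intro i
      split_ifs with hi
      · subst hi
        exact finrank_le_finrank_map_add_one _ (ker_evalXSubC_le_span σ hK hfixK (ha0 i) hb) _
      · rw [add_zero, ← LinearEquiv.finrank_eq (Submodule.equivMapOfInjective _
          (LinearMap.ker_eq_bot.mp (ker_evalXSubC_eq_bot σ hK (haconj i₁ i (Ne.symm hi)) hb)) _)]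
    have hV' : d ≤ ∑ i, finrank K ((V i).map (L i)) := by
      have := hV.trans (sum_le_sum fun i _ => hrank i)
      rw [sum_add_distrib, sum_ite_eq' univ i₁, if_pos (mem_univ _)] at this
      omega
    exact eq_zero_of_rightQuot_eq_zero σ hf hr (ih _ g (degLT_rightQuot σ f c d) hV' hgvan)

end Vanishing

section SkewProduct

variable {F : Type} [Field F] (σ : F ≃+* F)

/-- Coefficients of the product `(∑ Q_u x^u) · (∑ f_v x^v)` in the skew polynomial ring
`F[x; σ]`, where `x c = σ(c) x`. -/
def skewMul (Q f : ℕ → F) (j : ℕ) : F :=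
  ∑ u ∈ range (j + 1), Q u * (σ ^ u) (f (j - u))

lemma degLT_skewMul {d₁ d₂ : ℕ} {Q f : ℕ → F} (hQ : DegLT d₁ Q) (hf : DegLT d₂ f) :
    DegLT (d₁ + d₂ - 1) (skewMul σ Q f) := by
  intro j hj
  refine sum_eq_zero fun u hu => ?_
  by_cases hu₁ : d₁ ≤ u
  · rw [hQ u hu₁, zero_mul]
  · rw [hf (j - u) (by simp at hu; omega), map_zero, mul_zero]

lemma skewMul_zero_left (f : ℕ → F) : skewMul σ 0 f = 0 := by
  funext j
  simp [skewMul]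

lemma skewMul_sub_right (Q f g : ℕ → F) :
    skewMul σ Q (f - g) = skewMul σ Q f - skewMul σ Q g := by
  funext j
  simp only [skewMul, Pi.sub_apply, map_sub, mul_sub, sum_sub_distrib]

lemma opEval_skewMul {d₁ d₂ D : ℕ} {Q f : ℕ → F} (hQ : DegLT d₁ Q) (hf : DegLT d₂ f)
    (hD : d₁ + d₂ ≤ D + 1) (a y : F) :
    opEval σ D (skewMul σ Q f) a y = opEval σ d₁ Q a (opEval σ d₂ f a y) := by
  have hdeg := degLT_skewMul σ hQ hf
  rw [opEval_eq_of_degLT σ hdeg (by omega),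
    ← opEval_eq_of_degLT σ hdeg (by omega : d₁ + d₂ - 1 ≤ d₁ + d₂)]
  set G : ℕ → ℕ → F := fun u v => Q u * (σ ^ u) (f v) * opev σ a y (u + v)
  have hrhs : opEval σ d₁ Q a (opEval σ d₂ f a y)
      = ∑ u ∈ range d₁, ∑ v ∈ range d₂, G u v := by
    refine sum_congr rfl fun u _ => ?_
    rw [opEval, opev_sum, mul_sum]
    refine sum_congr rfl fun v _ => ?_
    rw [opev_mul, opev_opev]
    ring
  have hlhs : opEval σ (d₁ + d₂) (skewMul σ Q f) a y
      = ∑ u ∈ range (d₁ + d₂), ∑ v ∈ range (d₁ + d₂ - u), G u v := by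
    simp only [opEval, skewMul, sum_mul]
    rw [sum_comm' (t' := range (d₁ + d₂)) (s' := fun u => Ico u (d₁ + d₂))
      (h := fun j u => by simp only [mem_range, mem_Ico]; omega)]
    refine sum_congr rfl fun u _ => ?_
    rw [sum_Ico_eq_sum_range]
    exact sum_congr rfl fun v _ => by rw [Nat.add_sub_cancel_left]
  rw [hlhs, hrhs, sum_range_eq_of_eq_zero (by omega : d₁ ≤ d₁ + d₂)
    fun u hu => sum_eq_zero fun v _ => by simp only [G, hQ u hu, zero_mul]]
  refine sum_congr rfl fun u hu => ?_
  exact sum_range_eq_of_eq_zero (by simp at hu; omega)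
    fun v hv => by simp only [G, hf v hv, map_zero, mul_zero, zero_mul]

lemma DegLT.exists_leading_ne_zero {d : ℕ} {f : ℕ → F} (hf : DegLT d f) (hf0 : f ≠ 0) :
    ∃ u, f u ≠ 0 ∧ ∀ v, u < v → f v = 0 := by
  classical
  have hex : ∃ n, DegLT n f := ⟨d, hf⟩
  have hn0 : Nat.find hex ≠ 0 := fun h =>
    hf0 (funext fun j => Nat.find_spec hex j (by omega))
  refine ⟨Nat.find hex - 1, fun hu => Nat.find_min hex (by omega : Nat.find hex - 1 < _) ?_,
    fun v hv => Nat.find_spec hex v (by omega)⟩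
  intro v hv
  rcases hv.eq_or_lt with rfl | hv
  · exact hu
  · exact Nat.find_spec hex v (by omega)

lemma skewMul_ne_zero {d₁ d₂ : ℕ} {Q f : ℕ → F} (hQ : DegLT d₁ Q) (hf : DegLT d₂ f)
    (hQ0 : Q ≠ 0) (hf0 : f ≠ 0) : skewMul σ Q f ≠ 0 := by
  obtain ⟨u₀, hu₀, hQtop⟩ := hQ.exists_leading_ne_zero hQ0
  obtain ⟨v₀, hv₀, hftop⟩ := hf.exists_leading_ne_zero hf0
  intro h
  have htop := congrFun h (u₀ + v₀)
  rw [skewMul, sum_eq_single_of_mem u₀ (by simp), Nat.add_sub_cancel_left] at htop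
  · exact mul_ne_zero hu₀ ((map_ne_zero _).mpr hv₀) htop
  · intro u hu hne
    rcases lt_or_gt_of_ne hne with hlt | hgt
    · rw [hftop _ (by simp at hu; omega), map_zero, mul_zero]
    · rw [hQtop u hgt, zero_mul]

end SkewProduct

section Coefficients

variable {F : Type} [Field F] (σ : F ≃+* F)

def padZero {d : ℕ} (v : Fin d → F) : ℕ → F :=
  fun j => if h : j < d then v ⟨j, h⟩ else 0

lemma padZero_val {d : ℕ} (v : Fin d → F) (i : Fin d) : padZero v i = v i := dif_pos i.isLt

lemma degLT_padZero {d : ℕ} (v : Fin d → F) : DegLT d (padZero v) :=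
  fun _ hj => dif_neg (by omega)

lemma padZero_sub {d : ℕ} (v w : Fin d → F) : padZero (v - w) = padZero v - padZero w := by
  funext j
  by_cases h : j < d <;> simp [padZero, h]

lemma padZero_eq_zero_iff {d : ℕ} (v : Fin d → F) : padZero v = 0 ↔ v = 0 := by
  refine ⟨fun h => funext fun i => by rw [← padZero_val v, h, Pi.zero_apply, Pi.zero_apply], ?_⟩
  rintro rfl
  funext j
  by_cases h : j < d <;> simp [padZero, h]

lemma opEval_padZero {d : ℕ} (v : Fin d → F) (a y : F) :
    opEval σ d (padZero v) a y = ∑ i, v i * opev σ a y i := by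
  rw [opEval, ← Fin.sum_univ_eq_sum_range (fun j => padZero v j * opev σ a y j)]
  simp only [padZero_val]

open Module in
lemma exists_interpolation {ι : Type} [Fintype ι] {s D₀ D₁ : ℕ} (a β : ι → F)
    (R : Fin s → ι → F) (h : Fintype.card ι < D₀ + s * D₁) :
    ∃ Q : (Fin D₀ → F) × (Fin s → Fin D₁ → F), Q ≠ 0 ∧ ∀ p,
      opEval σ D₀ (padZero Q.1) (a p) (β p)
        + ∑ t, opEval σ D₁ (padZero (Q.2 t)) (a p) (R t p) = 0 := by
  let Ψ : ((Fin D₀ → F) × (Fin s → Fin D₁ → F)) →ₗ[F] (ι → F) :=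
    { toFun := fun Q p => ∑ i, Q.1 i * opev σ (a p) (β p) i
        + ∑ t, ∑ i, Q.2 t i * opev σ (a p) (R t p) i
      map_add' := fun Q Q' => funext fun p => by
        simp only [Prod.fst_add, Prod.snd_add, Pi.add_apply, add_mul, sum_add_distrib]
        ring
      map_smul' := fun c Q => funext fun p => by
        simp only [Prod.smul_fst, Prod.smul_snd, Pi.smul_apply, smul_eq_mul, RingHom.id_apply,
          mul_add, mul_sum, mul_assoc] }
  obtain ⟨Q, hQ, hQ0⟩ := Submodule.exists_mem_ne_zero_of_ne_bot
    (LinearMap.ker_ne_bot_of_finrank_lt (f := Ψ)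
      (by simpa [finrank_prod, finrank_pi_fintype] using h))
  refine ⟨Q, hQ0, fun p => ?_⟩
  simp only [opEval_padZero]
  exact congrFun (LinearMap.mem_ker.mp hQ) p

end Coefficients

section Decoding

open Module

variable {K F : Type} [Field K] [Field F] [Algebra K F] (σ : F ≃+* F)

lemma rkqMat_add_finrank_ker {s : ℕ} {ι : Type} [Fintype ι] (X : Matrix (Fin s) ι F) :
    rkqMat K X + finrank K (LinearMap.ker (Fintype.linearCombination K fun j r => X r j))
      = Fintype.card ι := by
  rw [rkqMat, ← Fintype.range_linearCombination, LinearMap.finrank_range_add_finrank_ker,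
    finrank_fintype_fun_eq_card]

variable (K) in
def blockKernel {s ℓ : ℕ} {nn : Fin ℓ → ℕ} (β : (Σ i : Fin ℓ, Fin (nn i)) → F)
    (E : Matrix (Fin s) (Σ i : Fin ℓ, Fin (nn i)) F) (i : Fin ℓ) : Submodule K F :=
  (LinearMap.ker (Fintype.linearCombination K fun μ r => E r ⟨i, μ⟩)).map
    (Fintype.linearCombination K fun μ : Fin (nn i) => β ⟨i, μ⟩)

lemma sum_finrank_blockKernel_add_wtM {s ℓ : ℕ} {nn : Fin ℓ → ℕ}
    {β : (Σ i : Fin ℓ, Fin (nn i)) → F}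
    (hβ : ∀ i, LinearIndependent K fun μ : Fin (nn i) => β ⟨i, μ⟩)
    (E : Matrix (Fin s) (Σ i : Fin ℓ, Fin (nn i)) F) :
    ∑ i, finrank K (blockKernel K β E i) + wtM K nn E = ∑ i, nn i := by
  rw [wtM, ← sum_add_distrib]
  refine sum_congr rfl fun i _ => ?_
  rw [blockKernel, LinearEquiv.finrank_eq (Submodule.equivMapOfInjective _
    (hβ i).fintypeLinearCombination_injective _).symm, add_comm]
  exact (rkqMat_add_finrank_ker (Matrix.of fun r μ => E r ⟨i, μ⟩)).trans (Fintype.card_fin _)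

lemma opEval_eq_zero_of_mem_blockKernel
    (hK : ∀ c : K, σ (algebraMap K F c) = algebraMap K F c)
    {s ℓ d d₁ : ℕ} {nn : Fin ℓ → ℕ} {β : (Σ i : Fin ℓ, Fin (nn i)) → F}
    {E : Matrix (Fin s) (Σ i : Fin ℓ, Fin (nn i)) F} {a : F} {i : Fin ℓ} {P : ℕ → F}
    (Q : Fin s → ℕ → F)
    (hP : ∀ μ, opEval σ d P a (β ⟨i, μ⟩) = -∑ t, opEval σ d₁ (Q t) a (E t ⟨i, μ⟩))
    {y : F} (hy : y ∈ blockKernel K β E i) : opEval σ d P a y = 0 := by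
  obtain ⟨c, hc, rfl⟩ := hy
  replace hc := fun t => congrFun (LinearMap.mem_ker.mp hc) t
  simp only [Fintype.linearCombination_apply, Finset.sum_apply, Pi.smul_apply,
    Pi.zero_apply] at hc ⊢
  rw [← opEvalₗ_apply σ hK, map_sum]
  simp only [map_smul, opEvalₗ_apply, hP, smul_neg, smul_sum, sum_neg_distrib]
  rw [sum_comm, neg_eq_zero]
  refine sum_eq_zero fun t _ => ?_
  simp only [← opEvalₗ_apply σ hK, ← map_smul, ← map_sum, hc t, map_zero]

lemma opEval_padZero_eq_codeword {s ℓ k : ℕ} {nn : Fin ℓ → ℕ} (aa : Fin ℓ → F)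
    (β : (Σ i : Fin ℓ, Fin (nn i)) → F) (M : Matrix (Fin s) (Fin k) F) (t : Fin s)
    (p : Σ i : Fin ℓ, Fin (nn i)) :
    opEval σ k (padZero (M t)) (aa p.1) (β p) = codeword σ nn aa β k M t p := by
  rw [opEval_padZero, codeword, Matrix.mul_apply]
  rfl

theorem padZero_add_sum_skewMul_eq_zero
    (hfix : ∀ x : F, σ x = x ↔ x ∈ Set.range (algebraMap K F))
    {ℓ : ℕ} {nn : Fin ℓ → ℕ} {aa : Fin ℓ → F} (ha0 : ∀ i, aa i ≠ 0)
    (haconj : ∀ i j : Fin ℓ, i ≠ j → ¬ SConj σ (aa i) (aa j))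
    {β : (Σ i : Fin ℓ, Fin (nn i)) → F}
    (hβ : ∀ i, LinearIndependent K fun μ : Fin (nn i) => β ⟨i, μ⟩)
    {s k D₀ D₁ : ℕ} (hD : D₁ + k ≤ D₀ + 1) {R : Matrix (Fin s) (Σ i : Fin ℓ, Fin (nn i)) F}
    {Q₀ : Fin D₀ → F} {Q : Fin s → Fin D₁ → F}
    (hQ : ∀ p, opEval σ D₀ (padZero Q₀) (aa p.1) (β p)
      + ∑ t, opEval σ D₁ (padZero (Q t)) (aa p.1) (R t p) = 0)
    {M : Matrix (Fin s) (Fin k) F}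
    (hM : D₀ + wtM K nn (R - codeword σ nn aa β k M) ≤ ∑ i, nn i) :
    padZero Q₀ + ∑ t, skewMul σ (padZero (Q t)) (padZero (M t)) = 0 := by
  have hK : ∀ c : K, σ (algebraMap K F c) = algebraMap K F c := fun c => (hfix _).mpr ⟨c, rfl⟩
  set E := R - codeword σ nn aa β k M
  -- at `β_p` the error `E = R - C(M)` is all that survives of the interpolation equation
  have hPβ : ∀ p, opEval σ D₀ (padZero Q₀ + ∑ t, skewMul σ (padZero (Q t)) (padZero (M t)))
      (aa p.1) (β p) = -∑ t, opEval σ D₁ (padZero (Q t)) (aa p.1) (E t p) := by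
    intro p
    have hE : ∀ t, opEval σ D₁ (padZero (Q t)) (aa p.1) (E t p)
        = opEval σ D₁ (padZero (Q t)) (aa p.1) (R t p)
          - opEval σ D₁ (padZero (Q t)) (aa p.1) (codeword σ nn aa β k M t p) :=
      fun t => map_sub (opEvalₗ K σ hK D₁ _ (aa p.1)) _ _
    rw [opEval_add_left, opEval_sum_left]
    simp only [opEval_skewMul σ (degLT_padZero _) (degLT_padZero _) hD,
      opEval_padZero_eq_codeword, hE, sum_sub_distrib]
    linear_combination hQ p
  refine eq_zero_of_opEval_eq_zero_on σ hK (fun x hx => (hfix x).mp hx) aa ha0 haconj D₀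
    (blockKernel K β E) _ ?_ ?_ fun i y hy =>
      opEval_eq_zero_of_mem_blockKernel σ hK _ (fun μ => hPβ ⟨i, μ⟩) hy
  · intro j hj
    simp only [Pi.add_apply, Finset.sum_apply, degLT_padZero _ j hj, zero_add]
    exact sum_eq_zero fun t _ =>
      degLT_skewMul σ (degLT_padZero _) (degLT_padZero _) j (by omega)
  · have := sum_finrank_blockKernel_add_wtM hβ E
    omega

lemma card_skewMul_solutions_le [Fintype F] {s k D₁ : ℕ} {Q : Fin s → Fin D₁ → F} {τ : Fin s}
    (hτ : Q τ ≠ 0) (P₀ : ℕ → F) :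
    Nat.card {M : Matrix (Fin s) (Fin k) F //
        P₀ + ∑ t, skewMul σ (padZero (Q t)) (padZero (M t)) = 0}
      ≤ Fintype.card F ^ (k * (s - 1)) := by
  classical
  -- a solution is determined by its rows off `τ`, since `Q_τ` is not a zero divisor
  have hinj : Function.Injective fun (M : {M : Matrix (Fin s) (Fin k) F //
      P₀ + ∑ t, skewMul σ (padZero (Q t)) (padZero (M t)) = 0}) (t : {t // t ≠ τ}) => M.1 t := by
    rintro ⟨M, hM⟩ ⟨M', hM'⟩ h
    have hoff : ∀ t, t ≠ τ → M t = M' t := fun t ht => congrFun h ⟨t, ht⟩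
    have hrow : skewMul σ (padZero (Q τ)) (padZero (M τ - M' τ)) = 0 := by
      have hsum := hM.trans hM'.symm
      rw [add_right_inj, ← add_sum_erase _ _ (mem_univ τ), ← add_sum_erase _ _ (mem_univ τ),
        sum_congr rfl fun t ht => by rw [hoff t (ne_of_mem_erase ht)], add_left_inj] at hsum
      rw [padZero_sub, skewMul_sub_right, hsum, sub_self]
    have hτrow : M τ = M' τ := by
      by_contra hne
      exact skewMul_ne_zero σ (degLT_padZero _) (degLT_padZero _)
        (mt (padZero_eq_zero_iff _).mp hτ) (mt (padZero_eq_zero_iff _).mp (sub_ne_zero.mpr hne))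
        hrow
    exact Subtype.ext (funext fun t => if ht : t = τ then ht ▸ hτrow else hoff t ht)
  calc _ ≤ Nat.card ({t // t ≠ τ} → Fin k → F) := Nat.card_le_card_of_injective _ hinj
    _ = Fintype.card F ^ (k * (s - 1)) := by
      simp [Nat.card_eq_fintype_card, ← pow_mul]

end Decoding

lemma exists_degrees {s n k : ℕ} (hkn : k ≤ n) (hA : 0 < s * (n - k + 1)) :
    ∃ D₀ D₁ : ℕ, D₁ + k ≤ D₀ + 1 ∧ n < D₀ + s * D₁ ∧
      ∀ w, (s + 1) * w < s * (n - k + 1) → D₀ + w ≤ n := by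
  -- `T` is the largest admissible error weight
  set T := (s * (n - k + 1) - 1) / (s + 1)
  have hT : (s + 1) * T ≤ s * (n - k + 1) - 1 := Nat.mul_div_le _ _
  have hTk : T + k ≤ n := by
    have h1 : s * (n - k + 1) ≤ (s + 1) * (n - k + 1) := Nat.mul_le_mul_right _ (by omega)
    have := Nat.lt_of_mul_lt_mul_left (a := s + 1) (by omega : (s + 1) * T < (s + 1) * (n - k + 1))
    omega
  refine ⟨n - T, n - T + 1 - k, by omega, ?_, fun w hw => ?_⟩
  · have h1 : s * (n - T + 1 - k) = s * (n - k + 1) - s * T := by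
      rw [← Nat.mul_sub]; congr 1; omega
    have h2 : (s + 1) * T = s * T + T := by ring
    omega
  · have : w ≤ T := (Nat.le_div_iff_mul_le (by omega)).mpr (by rw [mul_comm]; omega)
    omega

theorem list_size_le
    {K F : Type} [Field K] [Field F] [Algebra K F] [Fintype K] [Fintype F]
    (σ : F ≃+* F)
    (hfix : ∀ x : F, σ x = x ↔ x ∈ Set.range (algebraMap K F))
    {q m : ℕ} (hq : Fintype.card K = q) (hm : Module.finrank K F = m)
    {ℓ : ℕ} (nn : Fin ℓ → ℕ) (aa : Fin ℓ → F)
    (ha0 : ∀ i, aa i ≠ 0)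
    (haconj : ∀ i j : Fin ℓ, i ≠ j → ¬ SConj σ (aa i) (aa j))
    (β : (Σ i : Fin ℓ, Fin (nn i)) → F)
    (hβ : ∀ i, LinearIndependent K fun μ : Fin (nn i) => β ⟨i, μ⟩)
    {s : ℕ} {k n : ℕ} (hn : n = ∑ i, nn i)
    (hkn : k ≤ n) :
    ∀ R : Matrix (Fin s) (Σ i : Fin ℓ, Fin (nn i)) F,
      Nat.card {M : Matrix (Fin s) (Fin k) F //
          (s + 1) * wtM K nn (R - codeword σ nn aa β k M) < s * (n - k + 1)}
        ≤ q ^ (m * k * (s - 1)) := by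
  intro R
  rcases isEmpty_or_nonempty {M : Matrix (Fin s) (Fin k) F //
      (s + 1) * wtM K nn (R - codeword σ nn aa β k M) < s * (n - k + 1)} with hL | ⟨⟨M₀, hM₀⟩⟩
  · simp
  obtain ⟨D₀, D₁, hD, hcard, hwt⟩ := exists_degrees hkn (by omega : 0 < s * (n - k + 1))
  obtain ⟨⟨Q₀, Q⟩, hQ0, hQ⟩ :=
    exists_interpolation σ (fun p => aa p.1) β R (by simpa [hn] using hcard)
  have hsol : ∀ M : Matrix (Fin s) (Fin k) F,
      (s + 1) * wtM K nn (R - codeword σ nn aa β k M) < s * (n - k + 1) →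
        padZero Q₀ + ∑ t, skewMul σ (padZero (Q t)) (padZero (M t)) = 0 :=
    fun M hM => padZero_add_sum_skewMul_eq_zero σ hfix ha0 haconj hβ hD hQ (hn ▸ hwt _ hM)
  obtain ⟨τ, hτ⟩ : ∃ τ, Q τ ≠ 0 := by
    by_contra! hQ'
    have h := hsol M₀ hM₀
    have hzero : ∀ t, padZero (Q t) = 0 := fun t => (padZero_eq_zero_iff _).mpr (hQ' t)
    simp only [hzero, skewMul_zero_left, sum_const_zero, add_zero] at h
    exact hQ0 (Prod.ext ((padZero_eq_zero_iff _).mp h) (funext hQ'))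
  calc _ ≤ Nat.card {M : Matrix (Fin s) (Fin k) F //
          padZero Q₀ + ∑ t, skewMul σ (padZero (Q t)) (padZero (M t)) = 0} :=
        Nat.card_le_card_of_injective (Subtype.map id hsol)
          (Subtype.map_injective _ Function.injective_id)
    _ ≤ Fintype.card F ^ (k * (s - 1)) := card_skewMul_solutions_le σ hτ _
    _ = q ^ (m * k * (s - 1)) := by
      rw [Module.card_eq_pow_finrank (K := K), hq, hm, ← pow_mul, mul_assoc]

end Stmt14
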